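/- arXiv:1501.03016 — 2 statements merged into one kernel-verified Lean document; each statement's English description precedes it below -/
import Mathlib

section
/- There exists an absolute constant c > 0 such that for every odd integer n, every bijection φ : {0,1}^n → {0,1}^n that is a mapping from XOR to Majority (i.e., XOR(z) = Majority(φ(z)) for every z) satisfies avgStretch(φ) ≥ c·√n, where avgStretch(φ) = (1/(n·2^n)) · Σ_{x ∈ {0,1}^n} Σ_{i=1}^{n} dist(φ(x), φ(x + e_i)). -/
/-- `Majority(x) = 1` iff the number of coordinates equal to `1` exceeds `n/2`. -/
def majority {n : ℕ} (x : Fin n → Bool) : Bool :=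
  decide (n < 2 * (Finset.univ.filter (fun i => x i = true)).card)

/-- `XOR(x) = x_1 + ⋯ + x_n (mod 2)`. -/
def xorFun {n : ℕ} (x : Fin n → Bool) : Bool :=
  decide ((Finset.univ.filter (fun i => x i = true)).card % 2 = 1)

/-- `avgStretch(φ) = E_{x,i}[dist(φ(x), φ(x + e_i))]`, the expectation over a uniform
point `x` of the hypercube and a uniform direction `i`. -/
noncomputable def avgStretch {n : ℕ} (φ : (Fin n → Bool) → (Fin n → Bool)) : ℝ :=
  (∑ x : Fin n → Bool, ∑ i : Fin n,
    (hammingDist (φ x) (φ (Function.update x i (!(x i)))) : ℝ)) / (n * 2 ^ n)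

namespace XMaux

variable {n : ℕ}

def wt (x : Fin n → Bool) : ℕ := (Finset.univ.filter (fun i => x i = true)).card

lemma filter_update (x : Fin n → Bool) (i : Fin n) :
    (Finset.univ.filter (fun j => Function.update x i (!(x i)) j = true)) =
      if x i = true then (Finset.univ.filter (fun j => x j = true)).erase i
      else insert i (Finset.univ.filter (fun j => x j = true)) := by
  ext j
  by_cases hj : j = i
  · subst hj; cases h : x j <;> simp [Function.update_self, h]
  · cases h : x i <;>
      simp [Function.update_of_ne hj, hj, h, Finset.mem_erase, Finset.mem_insert]

lemma wt_update (x : Fin n → Bool) (i : Fin n) :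
    (x i = true ∧ wt (Function.update x i (!(x i))) + 1 = wt x) ∨
    (x i = false ∧ wt (Function.update x i (!(x i))) = wt x + 1) := by
  have hf := filter_update x i
  cases h : x i
  · right
    refine ⟨rfl, ?_⟩
    rw [h, if_neg (by simp)] at hf
    rw [wt, hf, Finset.card_insert_of_notMem (by simp [h])]
    rfl
  · left
    refine ⟨rfl, ?_⟩
    rw [h, if_pos rfl] at hf
    rw [wt, hf, Finset.card_erase_of_mem (by simp [h])]
    have hmem : i ∈ Finset.univ.filter (fun j => x j = true) := by simp [h]
    have : 1 ≤ (Finset.univ.filter (fun j => x j = true)).card :=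
      Finset.card_pos.2 ⟨i, hmem⟩
    unfold wt
    omega

lemma xor_flip (x : Fin n → Bool) (i : Fin n) :
    xorFun (Function.update x i (!(x i))) = !(xorFun x) := by
  have h := wt_update x i
  show decide (wt (Function.update x i (!(x i))) % 2 = 1) = !decide (wt x % 2 = 1)
  rcases h with ⟨_, h⟩ | ⟨_, h⟩ <;>
  · rw [Bool.eq_iff_iff]
    simp only [Bool.not_eq_true', decide_eq_true_eq, decide_eq_false_iff_not]
    omega

lemma wt_le_wt_add_dist (a b : Fin n → Bool) : wt a ≤ wt b + hammingDist a b := by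
  have hd : hammingDist a b = (Finset.univ.filter (fun i => a i ≠ b i)).card := rfl
  have hsub : (Finset.univ.filter (fun i => a i = true)) ⊆
      (Finset.univ.filter (fun i => b i = true)) ∪
      (Finset.univ.filter (fun i => a i ≠ b i)) := by
    intro i hi
    simp only [Finset.mem_filter, Finset.mem_union, Finset.mem_univ, true_and] at *
    by_cases h : b i = true
    · exact Or.inl h
    · exact Or.inr (by simp [hi, h])
  calc wt a ≤ ((Finset.univ.filter (fun i => b i = true)) ∪
      (Finset.univ.filter (fun i => a i ≠ b i))).card := Finset.card_le_card hsub
    _ ≤ wt b + hammingDist a b := by rw [hd]; exact Finset.card_union_le _ _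

/-- the "distance from the middle layer" potential -/
noncomputable def G (y : Fin n → Bool) : ℝ := |2 * (wt y : ℝ) - n|

lemma G_nonneg (y : Fin n → Bool) : 0 ≤ G y := abs_nonneg _

lemma G_add_G_le (a b : Fin n → Bool) (hab : majority a ≠ majority b) :
    G a + G b ≤ 2 * hammingDist a b := by
  have key : ∀ u v : Fin n → Bool, majority u = true → majority v = false →
      G u + G v ≤ 2 * hammingDist u v := by
    intro u v hu hv
    have hu' : n < 2 * wt u := of_decide_eq_true hu
    have hv' : 2 * wt v ≤ n := Nat.le_of_not_lt (of_decide_eq_false hv)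
    have hle := wt_le_wt_add_dist u v
    have hu'' : (n : ℝ) < 2 * wt u := by exact_mod_cast hu'
    have hv'' : 2 * (wt v : ℝ) ≤ n := by exact_mod_cast hv'
    have hle' : (wt u : ℝ) ≤ wt v + hammingDist u v := by exact_mod_cast hle
    unfold G
    rw [abs_of_pos (by linarith), abs_of_nonpos (by linarith)]
    linarith
  cases ha : majority a <;> cases hb : majority b
  · exact absurd (ha.trans hb.symm) hab
  · have := key b a hb ha
    rw [hammingDist_comm]
    linarith
  · exact key a b ha hb
  · exact absurd (ha.trans hb.symm) hab

def cubeEquiv (n : ℕ) : (Fin n → Bool) ≃ Finset (Fin n) where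
  toFun y := Finset.univ.filter (fun i => y i = true)
  invFun s := fun i => decide (i ∈ s)
  left_inv y := by funext i; simp
  right_inv s := by ext i; simp

lemma sum_wt_eq (F : ℕ → ℝ) :
    ∑ y : Fin n → Bool, F (wt y)
      = ∑ j ∈ Finset.range (n + 1), (n.choose j : ℝ) * F j := by
  have h1 : ∑ y : Fin n → Bool, F (wt y) = ∑ s : Finset (Fin n), F s.card := by
    rw [← Equiv.sum_comp (cubeEquiv n) (fun s => F s.card)]
    rfl
  rw [h1]
  have h2 : (Finset.univ : Finset (Finset (Fin n))) = (Finset.univ : Finset (Fin n)).powerset :=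
    Finset.powerset_univ.symm
  rw [h2, Finset.sum_powerset]
  rw [Finset.card_univ, Fintype.card_fin]
  refine Finset.sum_congr rfl fun j hj => ?_
  have hc : ∀ t ∈ Finset.powersetCard j (Finset.univ : Finset (Fin n)), F t.card = F j := by
    intro t ht
    rw [(Finset.mem_powersetCard.1 ht).2]
  rw [Finset.sum_congr rfl hc, Finset.sum_const, Finset.card_powersetCard,
    Finset.card_univ, Fintype.card_fin, nsmul_eq_mul]

lemma choose_mul_left (m j : ℕ) (hj : 1 ≤ j) :
    j * (m + 1).choose j = (m + 1) * m.choose (j - 1) := by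
  obtain ⟨r, rfl⟩ : ∃ r, j = r + 1 := ⟨j - 1, by omega⟩
  simpa [Nat.mul_comm, Nat.succ_eq_add_one] using (Nat.add_one_mul_choose_eq m r).symm

lemma choose_mul_right (m j : ℕ) (hj : j ≤ m + 1) :
    (m + 1 - j) * (m + 1).choose j = (m + 1) * m.choose j := by
  rcases Nat.eq_or_lt_of_le hj with h | h
  · subst h
    rw [Nat.choose_eq_zero_of_lt (Nat.lt_succ_self m)]
    simp
  · have hj' : j ≤ m := Nat.lt_succ_iff.1 h
    have hsymm : (m + 1).choose (m + 1 - j) = (m + 1).choose j := Nat.choose_symm hj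
    have h1 := choose_mul_left m (m + 1 - j) (by omega)
    rw [hsymm] at h1
    have h2 : m + 1 - j - 1 = m - j := by omega
    rw [h2, Nat.choose_symm hj'] at h1
    exact h1

lemma telescope (k : ℕ) :
    ∑ j ∈ Finset.Icc (k + 1) (2 * k + 1),
        (((2 * k + 1).choose j : ℝ)) * (2 * (j : ℝ) - (2 * (k : ℝ) + 1))
      = (2 * (k : ℝ) + 1) * ((2 * k).choose k) := by
  have hIcc : Finset.Icc (k + 1) (2 * k + 1) = Finset.Ico (k + 1) (2 * k + 2) := by
    exact (Finset.Ico_add_one_right_eq_Icc (k + 1) (2 * k + 1)).symm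
  rw [hIcc, Finset.sum_Ico_eq_sum_range]
  have hcard : 2 * k + 2 - (k + 1) = k + 1 := by omega
  rw [hcard]
  have hterm : ∀ i ∈ Finset.range (k + 1),
      (((2 * k + 1).choose (k + 1 + i) : ℝ)) * (2 * ((k + 1 + i : ℕ) : ℝ) - (2 * (k : ℝ) + 1))
        = (2 * (k : ℝ) + 1) * (((2 * k).choose (k + i) : ℝ))
            - (2 * (k : ℝ) + 1) * (((2 * k).choose (k + (i + 1)) : ℝ)) := by
    intro i hi
    have hi' : i ≤ k := Nat.lt_succ_iff.1 (Finset.mem_range.1 hi)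
    have e1 := choose_mul_left (2 * k) (k + 1 + i) (by omega)
    have e2 := choose_mul_right (2 * k) (k + 1 + i) (by omega)
    have h3 : k + 1 + i - 1 = k + i := by omega
    have h4 : 2 * k + 1 - (k + 1 + i) = k - i := by omega
    rw [h3] at e1
    rw [h4] at e2
    have e1' : ((k + 1 + i : ℕ) : ℝ) * ((2 * k + 1).choose (k + 1 + i))
        = (2 * (k : ℝ) + 1) * ((2 * k).choose (k + i)) := by
      exact_mod_cast e1
    have e2' : ((k - i : ℕ) : ℝ) * ((2 * k + 1).choose (k + 1 + i))
        = (2 * (k : ℝ) + 1) * ((2 * k).choose (k + (i + 1))) := by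
      have hidx : k + (i + 1) = k + 1 + i := by omega
      rw [hidx]
      exact_mod_cast e2
    have hcast1 : ((k + 1 + i : ℕ) : ℝ) = (k : ℝ) + 1 + i := by push_cast; ring
    have hcast2 : ((k - i : ℕ) : ℝ) = (k : ℝ) - i := by
      push_cast [Nat.cast_sub hi']
      ring
    rw [hcast1] at e1'
    rw [hcast2] at e2'
    rw [hcast1]
    linear_combination e1' - e2'
  rw [Finset.sum_congr rfl hterm]
  rw [Finset.sum_range_sub' (fun i => (2 * (k : ℝ) + 1) * (((2 * k).choose (k + i) : ℝ))) (k + 1)]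
  rw [Nat.choose_eq_zero_of_lt (by omega : 2 * k < k + (k + 1))]
  simp

lemma central_binom_sqrt (k : ℕ) (hk : 1 ≤ k) :
    (4 : ℝ) ^ k ≤ 2 * Real.sqrt k * ((2 * k).choose k) := by
  induction k with
  | zero => omega
  | succ m ih =>
    rcases Nat.eq_or_lt_of_le hk with h | h
    · have hm : m = 0 := by omega
      subst hm
      norm_num [Real.sqrt_one, Nat.choose]
    · have hm : 1 ≤ m := by omega
      have IH := ih hm
      have hrec : (m + 1) * Nat.centralBinom (m + 1) = 2 * (2 * m + 1) * Nat.centralBinom m :=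
        Nat.succ_mul_centralBinom_succ m
      have hcb : ∀ t : ℕ, Nat.centralBinom t = (2 * t).choose t := fun t => rfl
      rw [hcb, hcb] at hrec
      have hrec' : ((m : ℝ) + 1) * (((2 * (m + 1)).choose (m + 1) : ℕ) : ℝ)
          = 2 * (2 * (m : ℝ) + 1) * (((2 * m).choose m : ℕ) : ℝ) := by exact_mod_cast hrec
      set C : ℝ := (((2 * m).choose m : ℕ) : ℝ) with hCdef
      have hpos : (0 : ℝ) < (m : ℝ) + 1 := by positivity
      have hchoosepos : (0 : ℝ) < C := by
        rw [hCdef]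
        exact_mod_cast Nat.choose_pos (by omega)
      have hsq : 2 * Real.sqrt m * ((m : ℝ) + 1) ≤ (2 * (m : ℝ) + 1) * Real.sqrt ((m : ℝ) + 1) := by
        have h1 : 2 * Real.sqrt m * ((m : ℝ) + 1) = Real.sqrt (4 * m * ((m : ℝ) + 1) ^ 2) := by
          rw [show (4 * (m : ℝ) * ((m : ℝ) + 1) ^ 2) = (2 * ((m : ℝ) + 1)) ^ 2 * m by ring,
            Real.sqrt_mul (by positivity), Real.sqrt_sq (by positivity)]
          ring
        have h2 : (2 * (m : ℝ) + 1) * Real.sqrt ((m : ℝ) + 1)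
            = Real.sqrt ((2 * (m : ℝ) + 1) ^ 2 * ((m : ℝ) + 1)) := by
          rw [Real.sqrt_mul (by positivity), Real.sqrt_sq (by positivity)]
        rw [h1, h2]
        apply Real.sqrt_le_sqrt
        nlinarith [sq_nonneg ((m : ℝ))]
      have hC' : (((2 * (m + 1)).choose (m + 1) : ℕ) : ℝ)
          = 2 * (2 * (m : ℝ) + 1) * C / ((m : ℝ) + 1) := by
        field_simp
        linarith [hrec']
      have hgoal : ((m + 1 : ℕ) : ℝ) = (m : ℝ) + 1 := by push_cast; ring
      calc (4 : ℝ) ^ (m + 1) = 4 * 4 ^ m := by ring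
        _ ≤ 4 * (2 * Real.sqrt m * C) := by nlinarith [IH]
        _ ≤ 2 * Real.sqrt ((m : ℝ) + 1) * (2 * (2 * (m : ℝ) + 1) * C / ((m : ℝ) + 1)) := by
            rw [show 2 * Real.sqrt ((m : ℝ) + 1) * (2 * (2 * (m : ℝ) + 1) * C / ((m : ℝ) + 1))
                  = (2 * Real.sqrt ((m : ℝ) + 1) * (2 * (2 * (m : ℝ) + 1) * C)) / ((m : ℝ) + 1)
                by ring, le_div_iff₀ hpos]
            nlinarith [mul_le_mul_of_nonneg_left hsq
              (by positivity : (0 : ℝ) ≤ 4 * C)]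
        _ = 2 * Real.sqrt ((m + 1 : ℕ) : ℝ) * (((2 * (m + 1)).choose (m + 1) : ℕ) : ℝ) := by
            rw [hC', hgoal]

end XMaux

open XMaux

/-- There is an absolute constant `c > 0` such that for every odd `n`, every bijection
from `XOR` to `Majority` has average stretch at least `c·√n`. -/
theorem xor_to_majority_avgStretch :
    ∃ c : ℝ, 0 < c ∧ ∀ n : ℕ, Odd n →
      ∀ φ : (Fin n → Bool) → (Fin n → Bool), Function.Bijective φ →
      (∀ z : Fin n → Bool, xorFun z = majority (φ z)) →
      c * Real.sqrt n ≤ avgStretch φ := by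
  refine ⟨1/4, by norm_num, ?_⟩
  intro n hn φ hφ hz
  obtain ⟨k, hk⟩ := hn
  subst hk
  -- step A : edges flip majority
  have hedge : ∀ (x : Fin (2 * k + 1) → Bool) (i : Fin (2 * k + 1)),
      G (φ x) + G (φ (Function.update x i (!(x i))))
        ≤ 2 * (hammingDist (φ x) (φ (Function.update x i (!(x i)))) : ℝ) := by
    intro x i
    apply G_add_G_le
    rw [← hz, ← hz, xor_flip]
    exact (Bool.not_ne_self (xorFun x)).symm
  -- involution sums
  have hbij : ∀ i : Fin (2 * k + 1), Function.Bijective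
      (fun x : Fin (2 * k + 1) → Bool => Function.update x i (!(x i))) := by
    intro i
    apply Function.Involutive.bijective
    intro x
    simp [Function.update_self, Function.update_idem]
  have hEsum : ∀ i : Fin (2 * k + 1),
      ∑ x : Fin (2 * k + 1) → Bool, G (φ (Function.update x i (!(x i))))
        = ∑ x : Fin (2 * k + 1) → Bool, G (φ x) :=
    fun i => Fintype.sum_bijective _ (hbij i) _ _ (fun x => rfl)
  have hφsum : ∑ x : Fin (2 * k + 1) → Bool, G (φ x)
      = ∑ y : Fin (2 * k + 1) → Bool, G y :=
    Fintype.sum_bijective φ hφ _ _ (fun x => rfl)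
  -- per direction bound
  have hdir : ∀ i : Fin (2 * k + 1), ∑ y : Fin (2 * k + 1) → Bool, G y
      ≤ ∑ x : Fin (2 * k + 1) → Bool,
          (hammingDist (φ x) (φ (Function.update x i (!(x i)))) : ℝ) := by
    intro i
    have h1 : ∑ x : Fin (2 * k + 1) → Bool,
        (G (φ x) + G (φ (Function.update x i (!(x i))))) / 2
        = ∑ y : Fin (2 * k + 1) → Bool, G y := by
      rw [← Finset.sum_div, Finset.sum_add_distrib, hEsum i, hφsum]
      ring
    rw [← h1]
    apply Finset.sum_le_sum
    intro x _
    linarith [hedge x i]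
  -- step B : total sum bound
  have hS : ((2 * k + 1 : ℕ) : ℝ) * ∑ y : Fin (2 * k + 1) → Bool, G y
      ≤ ∑ x : Fin (2 * k + 1) → Bool, ∑ i : Fin (2 * k + 1),
          (hammingDist (φ x) (φ (Function.update x i (!(x i)))) : ℝ) := by
    rw [Finset.sum_comm]
    calc ((2 * k + 1 : ℕ) : ℝ) * ∑ y : Fin (2 * k + 1) → Bool, G y
        = ∑ _i : Fin (2 * k + 1), ∑ y : Fin (2 * k + 1) → Bool, G y := by
          rw [Finset.sum_const, Finset.card_univ, Fintype.card_fin, nsmul_eq_mul]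
      _ ≤ _ := Finset.sum_le_sum fun i _ => hdir i
  have hncast : ((2 * k + 1 : ℕ) : ℝ) = 2 * (k : ℝ) + 1 := by push_cast; ring
  -- step C : counting
  have hcount : (2 * (k : ℝ) + 1) * ((2 * k).choose k : ℝ)
      ≤ ∑ y : Fin (2 * k + 1) → Bool, G y := by
    have h1 : ∑ y : Fin (2 * k + 1) → Bool, G y
        = ∑ j ∈ Finset.range (2 * k + 1 + 1),
            ((2 * k + 1).choose j : ℝ) * |2 * (j : ℝ) - ((2 * k + 1 : ℕ) : ℝ)| :=
      sum_wt_eq (fun j => |2 * (j : ℝ) - ((2 * k + 1 : ℕ) : ℝ)|)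
    have h2 : ∑ j ∈ Finset.Icc (k + 1) (2 * k + 1),
          ((2 * k + 1).choose j : ℝ) * |2 * (j : ℝ) - ((2 * k + 1 : ℕ) : ℝ)|
        ≤ ∑ j ∈ Finset.range (2 * k + 1 + 1),
            ((2 * k + 1).choose j : ℝ) * |2 * (j : ℝ) - ((2 * k + 1 : ℕ) : ℝ)| := by
      apply Finset.sum_le_sum_of_subset_of_nonneg
      · intro j hj
        rw [Finset.mem_range]
        have := (Finset.mem_Icc.1 hj).2
        omega
      · intro j _ _
        positivity
    have h3 : ∑ j ∈ Finset.Icc (k + 1) (2 * k + 1),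
          ((2 * k + 1).choose j : ℝ) * |2 * (j : ℝ) - ((2 * k + 1 : ℕ) : ℝ)|
        = ∑ j ∈ Finset.Icc (k + 1) (2 * k + 1),
            (((2 * k + 1).choose j : ℝ)) * (2 * (j : ℝ) - (2 * (k : ℝ) + 1)) := by
      apply Finset.sum_congr rfl
      intro j hj
      have hj1 : k + 1 ≤ j := (Finset.mem_Icc.1 hj).1
      rw [hncast, abs_of_pos]
      have : (k : ℝ) + 1 ≤ (j : ℝ) := by exact_mod_cast hj1
      linarith
    rw [h1]
    calc (2 * (k : ℝ) + 1) * ((2 * k).choose k : ℝ)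
        = ∑ j ∈ Finset.Icc (k + 1) (2 * k + 1),
            (((2 * k + 1).choose j : ℝ)) * (2 * (j : ℝ) - (2 * (k : ℝ) + 1)) :=
          (telescope k).symm
      _ = ∑ j ∈ Finset.Icc (k + 1) (2 * k + 1),
            ((2 * k + 1).choose j : ℝ) * |2 * (j : ℝ) - ((2 * k + 1 : ℕ) : ℝ)| := h3.symm
      _ ≤ _ := h2
  -- step D : conclude
  rw [avgStretch]
  have hden : (0 : ℝ) < ((2 * k + 1 : ℕ) : ℝ) * 2 ^ (2 * k + 1) := by positivity
  rw [le_div_iff₀ hden]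
  have hCpos : (0 : ℝ) ≤ ((2 * k).choose k : ℝ) := by positivity
  have hpow : (2 : ℝ) ^ (2 * k + 1) = 2 * 4 ^ k := by
    rw [pow_succ, pow_mul]
    norm_num
    ring
  have hkey : Real.sqrt ((2 * k + 1 : ℕ) : ℝ) * (4 : ℝ) ^ k
      ≤ 2 * ((2 * k + 1 : ℕ) : ℝ) * ((2 * k).choose k : ℝ) := by
    rcases Nat.eq_zero_or_pos k with hk0 | hk1
    · subst hk0
      norm_num [Real.sqrt_one]
    · have hcb := central_binom_sqrt k hk1
      have hsq1 : Real.sqrt k ≤ Real.sqrt ((2 * k + 1 : ℕ) : ℝ) := by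
        apply Real.sqrt_le_sqrt
        rw [hncast]
        linarith [Nat.cast_nonneg (α := ℝ) k]
      have hsq2 : Real.sqrt ((2 * k + 1 : ℕ) : ℝ) * Real.sqrt ((2 * k + 1 : ℕ) : ℝ)
          = ((2 * k + 1 : ℕ) : ℝ) :=
        Real.mul_self_sqrt (Nat.cast_nonneg _)
      have hs0 : (0 : ℝ) ≤ Real.sqrt ((2 * k + 1 : ℕ) : ℝ) := Real.sqrt_nonneg _
      have hs0' : (0 : ℝ) ≤ Real.sqrt k := Real.sqrt_nonneg _
      calc Real.sqrt ((2 * k + 1 : ℕ) : ℝ) * (4 : ℝ) ^ k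
          ≤ Real.sqrt ((2 * k + 1 : ℕ) : ℝ) * (2 * Real.sqrt k * ((2 * k).choose k : ℝ)) :=
            mul_le_mul_of_nonneg_left hcb hs0
        _ ≤ 2 * ((2 * k + 1 : ℕ) : ℝ) * ((2 * k).choose k : ℝ) := by
            nlinarith [mul_le_mul_of_nonneg_left hsq1 hs0]
  have hfinal : 1 / 4 * Real.sqrt ((2 * k + 1 : ℕ) : ℝ) * (((2 * k + 1 : ℕ) : ℝ) * 2 ^ (2 * k + 1))
      ≤ ((2 * k + 1 : ℕ) : ℝ) * ((2 * (k : ℝ) + 1) * ((2 * k).choose k : ℝ)) := by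
    rw [hpow, ← hncast]
    nlinarith [hkey, Nat.cast_nonneg (α := ℝ) (2 * k + 1), Real.sqrt_nonneg ((2 * k + 1 : ℕ) : ℝ)]
  calc 1 / 4 * Real.sqrt ((2 * k + 1 : ℕ) : ℝ) * (((2 * k + 1 : ℕ) : ℝ) * 2 ^ (2 * k + 1))
      ≤ ((2 * k + 1 : ℕ) : ℝ) * ((2 * (k : ℝ) + 1) * ((2 * k).choose k : ℝ)) := hfinal
    _ ≤ ((2 * k + 1 : ℕ) : ℝ) * ∑ y : Fin (2 * k + 1) → Bool, G y :=
        mul_le_mul_of_nonneg_left hcount (Nat.cast_nonneg _)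
    _ ≤ _ := hS
end

section
/- There exist constants c > 0 and K > 0 such that for all sufficiently large n the following holds. Among all subsets A ⊆ {0,1}^n, the fraction of A for which there exists an injective map φ_A : {0,1}^{n−1} → {0,1}^n satisfying (1) for every x ∈ {0,1}^{n−1}, dist(x, φ_A(x)_{[1,…,n−1]}) ≤ 1, where φ_A(x)_{[1,…,n−1]} denotes the restriction of φ_A(x) to its first n−1 coordinates, and (2) |{x ∈ {0,1}^{n−1} : φ_A(x) ∈ A}| ≥ (1 − K/n) · 2^{n−1}, is at least 1 − 2^{−2^{cn}}. -/
open scoped Classical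
open Finset Real

set_option maxHeartbeats 1000000

namespace RSI

variable {n : ℕ}

abbrev Q (n : ℕ) := Fin n → Bool
abbrev Pt (n : ℕ) := Fin (n + 1) → Bool
abbrev Sample (n : ℕ) := Pt n → Bool

/-! ### points and flips -/

def pt (v : Q n) (b : Bool) : Pt n := Fin.snoc v b

lemma pt_inj {v v' : Q n} {b b' : Bool} (h : pt v b = pt v' b') : v = v' ∧ b = b' := by
  constructor
  · funext j
    have := congrFun h j.castSucc
    simpa [pt] using this
  · have := congrFun h (Fin.last n)
    simpa [pt] using this

def flip (d : Fin n) (v : Q n) : Q n := Function.update v d (!v d)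

@[simp] lemma flip_apply_self (d : Fin n) (v : Q n) : flip d v d = !v d := by
  simp [flip]

lemma flip_apply_ne (d : Fin n) (v : Q n) {j : Fin n} (h : j ≠ d) : flip d v j = v j := by
  simp [flip, Function.update_of_ne h]

@[simp] lemma flip_flip (d : Fin n) (v : Q n) : flip d (flip d v) = v := by
  funext j
  by_cases h : j = d
  · subst h; simp
  · rw [flip_apply_ne _ _ h, flip_apply_ne _ _ h]

/-! ### indicator -/

noncomputable def ind (P : Prop) : ℝ := if P then 1 else 0

lemma ind_nonneg (P : Prop) : 0 ≤ ind P := by unfold ind; split <;> norm_num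

lemma ind_le_one (P : Prop) : ind P ≤ 1 := by unfold ind; split <;> norm_num

lemma ind_mul (P Q' : Prop) : ind (P ∧ Q') = ind P * ind Q' := by
  unfold ind
  by_cases hP : P <;> by_cases hQ : Q' <;> simp [hP, hQ]

lemma ind_not (P : Prop) : ind (¬ P) = 1 - ind P := by
  unfold ind; by_cases hP : P <;> simp [hP]

lemma ind_congr {P Q' : Prop} (h : P ↔ Q') : ind P = ind Q' := by
  unfold ind; by_cases hP : P
  · rw [if_pos hP, if_pos (h.mp hP)]
  · rw [if_neg hP, if_neg (fun hq => hP (h.mpr hq))]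

/-! ### dependsOn and expectation -/

def dependsOn {α : Sort*} (S : Finset (Pt n)) (f : Sample n → α) : Prop :=
  ∀ g g' : Sample n, (∀ p ∈ S, g p = g' p) → f g = f g'

def eventDep (S : Finset (Pt n)) (E : Sample n → Prop) : Prop :=
  ∀ g g' : Sample n, (∀ p ∈ S, g p = g' p) → (E g ↔ E g')

lemma eventDep.ind {S : Finset (Pt n)} {E : Sample n → Prop} (h : eventDep S E) :
    dependsOn S (fun g => ind (E g)) := fun g g' hg => ind_congr (h g g' hg)

lemma dependsOn_mono {α : Sort*} {S T : Finset (Pt n)} {f : Sample n → α} (hST : S ⊆ T)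
    (h : dependsOn S f) : dependsOn T f := fun g g' hg => h g g' (fun p hp => hg p (hST hp))

lemma eventDep_mono {S T : Finset (Pt n)} {E : Sample n → Prop} (hST : S ⊆ T)
    (h : eventDep S E) : eventDep T E := fun g g' hg => h g g' (fun p hp => hg p (hST hp))

lemma eventDep_not {S : Finset (Pt n)} {E : Sample n → Prop} (h : eventDep S E) :
    eventDep S (fun g => ¬ E g) := fun g g' hg => not_congr (h g g' hg)

noncomputable def Ex (f : Sample n → ℝ) : ℝ :=
  (∑ g : Sample n, f g) / (Fintype.card (Sample n) : ℝ)

lemma card_sample_pos : 0 < (Fintype.card (Sample n) : ℝ) := by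
  exact_mod_cast Fintype.card_pos

lemma Ex_const (c : ℝ) : Ex (fun _ : Sample n => c) = c := by
  unfold Ex
  rw [Finset.sum_const, card_univ, nsmul_eq_mul]
  field_simp

lemma Ex_add (f h : Sample n → ℝ) : Ex (fun g => f g + h g) = Ex f + Ex h := by
  unfold Ex
  rw [Finset.sum_add_distrib, add_div]

lemma Ex_sub (f h : Sample n → ℝ) : Ex (fun g => f g - h g) = Ex f - Ex h := by
  unfold Ex
  rw [Finset.sum_sub_distrib, sub_div]

lemma Ex_smul (c : ℝ) (f : Sample n → ℝ) : Ex (fun g => c * f g) = c * Ex f := by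
  unfold Ex
  rw [← Finset.mul_sum, mul_div_assoc]

lemma Ex_mono {f h : Sample n → ℝ} (hfh : ∀ g, f g ≤ h g) : Ex f ≤ Ex h := by
  unfold Ex
  have h1 : (∑ g : Sample n, f g) ≤ ∑ g : Sample n, h g := Finset.sum_le_sum (fun g _ => hfh g)
  exact (div_le_div_iff_of_pos_right card_sample_pos).mpr h1

lemma Ex_nonneg {f : Sample n → ℝ} (hf : ∀ g, 0 ≤ f g) : 0 ≤ Ex f := by
  unfold Ex
  apply div_nonneg (Finset.sum_nonneg (fun g _ => hf g)) card_sample_pos.le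

lemma Ex_sum {ι : Type*} (s : Finset ι) (F : ι → Sample n → ℝ) :
    Ex (fun g => ∑ i ∈ s, F i g) = ∑ i ∈ s, Ex (F i) := by
  unfold Ex
  rw [Finset.sum_comm, Finset.sum_div]

/-! ### splitting and independence -/

def splitEquiv (S : Finset (Pt n)) :
    Sample n ≃ (({p : Pt n // p ∈ S} → Bool) × ({p : Pt n // p ∉ S} → Bool)) where
  toFun g := (fun a => g a.1, fun b => g b.1)
  invFun ab p := if h : p ∈ S then ab.1 ⟨p, h⟩ else ab.2 ⟨p, h⟩
  left_inv g := by
    funext p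
    by_cases h : p ∈ S <;> simp [h]
  right_inv ab := by
    ext x
    · simp [x.2]
    · simp [x.2]

lemma splitEquiv_symm_mem (S : Finset (Pt n)) (a b) {p : Pt n} (h : p ∈ S) :
    (splitEquiv S).symm (a, b) p = a ⟨p, h⟩ := by
  simp [splitEquiv, h]

lemma splitEquiv_symm_not_mem (S : Finset (Pt n)) (a b) {p : Pt n} (h : p ∉ S) :
    (splitEquiv S).symm (a, b) p = b ⟨p, h⟩ := by
  simp [splitEquiv, h]

lemma sum_split (S : Finset (Pt n)) (F : Sample n → ℝ) :
    ∑ g : Sample n, F g =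
      ∑ a : {p : Pt n // p ∈ S} → Bool, ∑ b : {p : Pt n // p ∉ S} → Bool,
        F ((splitEquiv S).symm (a, b)) := by
  rw [← Equiv.sum_comp (splitEquiv S).symm F, Fintype.sum_prod_type]

lemma Ex_mul {f h : Sample n → ℝ} {S T : Finset (Pt n)} (hf : dependsOn S f)
    (hh : dependsOn T h) (hST : Disjoint S T) :
    Ex (fun g => f g * h g) = Ex f * Ex h := by
  classical
  have hh' : dependsOn (Sᶜ) h := by
    refine dependsOn_mono ?_ hh
    intro p hp
    simp only [Finset.mem_compl]
    exact fun hpS => (Finset.disjoint_left.mp hST) hpS hp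
  set A := ({p : Pt n // p ∈ S} → Bool)
  set B := ({p : Pt n // p ∉ S} → Bool)
  set F0 : A → ℝ := fun a => f ((splitEquiv S).symm (a, fun _ => false)) with hF0
  set H0 : B → ℝ := fun b => h ((splitEquiv S).symm (fun _ => false, b)) with hH0
  have keyf : ∀ (a : A) (b : B), f ((splitEquiv S).symm (a, b)) = F0 a := by
    intro a b
    apply hf
    intro p hp
    rw [splitEquiv_symm_mem S _ _ hp, splitEquiv_symm_mem S _ _ hp]
  have keyh : ∀ (a : A) (b : B), h ((splitEquiv S).symm (a, b)) = H0 b := by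
    intro a b
    apply hh'
    intro p hp
    rw [Finset.mem_compl] at hp
    rw [splitEquiv_symm_not_mem S _ _ hp, splitEquiv_symm_not_mem S _ _ hp]
  have S1 : ∑ g : Sample n, f g * h g = (∑ a : A, F0 a) * (∑ b : B, H0 b) := by
    rw [sum_split S, Finset.sum_mul_sum]
    refine Finset.sum_congr rfl (fun a _ => Finset.sum_congr rfl (fun b _ => ?_))
    rw [keyf a b, keyh a b]
  have S2 : ∑ g : Sample n, f g = (∑ a : A, F0 a) * (Fintype.card B : ℝ) := by
    rw [sum_split S]
    have : ∀ a : A, ∑ b : B, f ((splitEquiv S).symm (a, b)) = F0 a * (Fintype.card B : ℝ) := by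
      intro a
      rw [Finset.sum_congr rfl (fun b _ => keyf a b), Finset.sum_const, card_univ,
        nsmul_eq_mul, mul_comm]
    rw [Finset.sum_congr rfl (fun a _ => this a), ← Finset.sum_mul]
  have S3 : ∑ g : Sample n, h g = (Fintype.card A : ℝ) * (∑ b : B, H0 b) := by
    rw [sum_split S]
    have : ∀ a : A, ∑ b : B, h ((splitEquiv S).symm (a, b)) = ∑ b : B, H0 b :=
      fun a => Finset.sum_congr rfl (fun b _ => keyh a b)
    rw [Finset.sum_congr rfl (fun a _ => this a), Finset.sum_const, card_univ, nsmul_eq_mul]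
  have cardN : (Fintype.card (Sample n) : ℝ) = (Fintype.card A : ℝ) * (Fintype.card B : ℝ) := by
    have h1 : Fintype.card (Sample n) = Fintype.card A * Fintype.card B := by
      rw [Fintype.card_congr (splitEquiv S), Fintype.card_prod]
    exact_mod_cast h1
  unfold Ex
  rw [S1, S2, S3, cardN]
  have hA : (0:ℝ) < (Fintype.card A : ℝ) := by exact_mod_cast Fintype.card_pos
  have hB : (0:ℝ) < (Fintype.card B : ℝ) := by exact_mod_cast Fintype.card_pos
  field_simp

lemma dependsOn_prod {ι : Type*} (s : Finset ι) (F : ι → Sample n → ℝ) (T : ι → Finset (Pt n))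
    (hdep : ∀ i ∈ s, dependsOn (T i) (F i)) :
    dependsOn (s.biUnion T) (fun g => ∏ i ∈ s, F i g) := by
  intro g g' hg
  refine Finset.prod_congr rfl (fun i hi => hdep i hi g g' (fun p hp => hg p ?_))
  exact Finset.mem_biUnion.mpr ⟨i, hi, hp⟩

lemma Ex_prod {ι : Type*} (s : Finset ι) (F : ι → Sample n → ℝ) (T : ι → Finset (Pt n))
    (hdep : ∀ i ∈ s, dependsOn (T i) (F i))
    (hdisj : ∀ i ∈ s, ∀ j ∈ s, i ≠ j → Disjoint (T i) (T j)) :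
    Ex (fun g => ∏ i ∈ s, F i g) = ∏ i ∈ s, Ex (F i) := by
  classical
  induction s using Finset.induction_on with
  | empty => simp [Ex_const]
  | @insert a s ha ih =>
    have h1 : ∀ g : Sample n, (∏ i ∈ insert a s, F i g) = F a g * ∏ i ∈ s, F i g := by
      intro g
      rw [Finset.prod_insert ha]
    rw [show (fun g => ∏ i ∈ insert a s, F i g) = fun g => F a g * ∏ i ∈ s, F i g from
      funext h1]
    rw [Ex_mul (hdep a (Finset.mem_insert_self a s))
      (dependsOn_prod s F T (fun i hi => hdep i (Finset.mem_insert_of_mem hi)))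
      (Finset.disjoint_biUnion_right _ _ _ |>.mpr (fun i hi =>
        hdisj a (Finset.mem_insert_self a s) i (Finset.mem_insert_of_mem hi)
          (fun h => ha (h ▸ hi))))]
    rw [Finset.prod_insert ha,
      ih (fun i hi => hdep i (Finset.mem_insert_of_mem hi))
        (fun i hi j hj hij => hdisj i (Finset.mem_insert_of_mem hi) j
          (Finset.mem_insert_of_mem hj) hij)]

/-! ### basic probabilities -/

instance uniqueMemSingleton (p : Pt n) : Unique {q : Pt n // q ∈ ({p} : Finset (Pt n))} where
  default := ⟨p, Finset.mem_singleton_self p⟩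
  uniq := by
    rintro ⟨q, hq⟩
    simp only [Finset.mem_singleton] at hq
    subst hq
    rfl

lemma Ex_ind_single (p : Pt n) (b : Bool) : Ex (fun g => ind (g p = b)) = 1 / 2 := by
  classical
  rw [show (fun g : Sample n => ind (g p = b)) = fun g => ind (g p = b) * 1 from by
    funext g; ring]
  rw [Ex_mul (f := fun g => ind (g p = b)) (h := fun _ => 1) (S := {p}) (T := ∅)
    (fun g g' hg => ind_congr (by rw [hg p (Finset.mem_singleton_self p)]))
    (fun _ _ _ => rfl) (Finset.disjoint_empty_right _)]
  rw [Ex_const, mul_one]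
  unfold Ex
  have hsum : ∑ g : Sample n, ind (g p = b) = (Fintype.card (Sample n) : ℝ) / 2 := by
    rw [sum_split {p}]
    have : ∀ (a : {q : Pt n // q ∈ ({p} : Finset (Pt n))} → Bool)
        (c : {q : Pt n // q ∉ ({p} : Finset (Pt n))} → Bool),
        ind ((splitEquiv {p}).symm (a, c) p = b) = ind (a default = b) := by
      intro a c
      rw [splitEquiv_symm_mem {p} a c (Finset.mem_singleton_self p)]
      rfl
    rw [Finset.sum_congr rfl (fun a _ => Finset.sum_congr rfl (fun c _ => this a c))]
    have h2 : ∑ a : {q : Pt n // q ∈ ({p} : Finset (Pt n))} → Bool, ind (a default = b) = 1 := by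
      rw [Fintype.sum_equiv (Equiv.funUnique {q : Pt n // q ∈ ({p} : Finset (Pt n))} Bool)
        (fun a => ind (a default = b)) (fun x : Bool => ind (x = b)) (fun a => rfl)]
      cases b <;> simp [ind]
    have hN : (Fintype.card (Sample n)) =
        2 * Fintype.card ({q : Pt n // q ∉ ({p} : Finset (Pt n))} → Bool) := by
      rw [Fintype.card_congr (splitEquiv {p}), Fintype.card_prod,
        Fintype.card_congr
          (Equiv.funUnique {q : Pt n // q ∈ ({p} : Finset (Pt n))} Bool),
        Fintype.card_bool]
    rw [Finset.sum_comm, Finset.sum_congr rfl (fun c _ => h2), Finset.sum_const, card_univ,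
      nsmul_eq_mul, mul_one, hN]
    push_cast
    ring
  rw [hsum]
  field_simp

lemma Ex_ind_not {E : Sample n → Prop} :
    Ex (fun g => ind (¬ E g)) = 1 - Ex (fun g => ind (E g)) := by
  rw [show (fun g : Sample n => ind (¬ E g)) = fun g => (1 : ℝ) - ind (E g) from
    funext (fun g => ind_not (E g)), Ex_sub, Ex_const]

lemma Ex_ind_pair {p q : Pt n} (hpq : p ≠ q) (b c : Bool) :
    Ex (fun g => ind (g p = b ∧ g q = c)) = 1 / 4 := by
  rw [show (fun g : Sample n => ind (g p = b ∧ g q = c)) =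
    fun g => ind (g p = b) * ind (g q = c) from funext (fun g => ind_mul _ _)]
  rw [Ex_mul (S := {p}) (T := {q})
    (fun g g' hg => ind_congr (by rw [hg p (Finset.mem_singleton_self p)]))
    (fun g g' hg => ind_congr (by rw [hg q (Finset.mem_singleton_self q)]))
    (Finset.disjoint_singleton.mpr hpq)]
  rw [Ex_ind_single, Ex_ind_single]
  norm_num

/-! ### the process -/

def Lonely (g : Sample n) (v : Q n) : Prop := g (pt v false) = false ∧ g (pt v true) = false

def Dbl (g : Sample n) (w : Q n) : Prop := g (pt w false) = true ∧ g (pt w true) = true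

lemma pt_false_ne_true (v w : Q n) : pt v false ≠ pt w true := by
  intro h
  exact Bool.false_ne_true (pt_inj h).2

lemma Ex_ind_Lonely (v : Q n) : Ex (fun g => ind (Lonely g v)) = 1 / 4 :=
  Ex_ind_pair (pt_false_ne_true v v) false false

lemma Ex_ind_Dbl (w : Q n) : Ex (fun g => ind (Dbl g w)) = 1 / 4 :=
  Ex_ind_pair (pt_false_ne_true w w) true true

def AliveT : List (Fin n) → ((Q n → Sample n → Prop) × (Q n → Sample n → Prop))
  | [] => (fun v g => Lonely g v, fun _ _ => False)
  | d :: l =>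
    (fun v g => (AliveT l).1 v g ∧ ¬ (Dbl g (flip d v) ∧ ¬ (AliveT l).2 (flip d v) g),
     fun w g => (AliveT l).2 w g ∨ ((AliveT l).1 (flip d w) g ∧ Dbl g w ∧ ¬ (AliveT l).2 w g))

def Alive (l : List (Fin n)) (v : Q n) (g : Sample n) : Prop := (AliveT l).1 v g

def Taken (l : List (Fin n)) (w : Q n) (g : Sample n) : Prop := (AliveT l).2 w g

def Avail (l : List (Fin n)) (w : Q n) (g : Sample n) : Prop := Dbl g w ∧ ¬ Taken l w g

def Succ (l : List (Fin n)) (d : Fin n) (w : Q n) (g : Sample n) : Prop :=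
  Alive l (flip d w) g ∧ Avail l w g

lemma Alive_nil (v : Q n) (g : Sample n) : Alive [] v g ↔ Lonely g v := Iff.rfl

lemma Taken_nil (w : Q n) (g : Sample n) : Taken [] w g ↔ False := Iff.rfl

lemma Alive_cons (d : Fin n) (l : List (Fin n)) (v : Q n) (g : Sample n) :
    Alive (d :: l) v g ↔ Alive l v g ∧ ¬ Avail l (flip d v) g := Iff.rfl

lemma Taken_cons (d : Fin n) (l : List (Fin n)) (w : Q n) (g : Sample n) :
    Taken (d :: l) w g ↔ Taken l w g ∨ Succ l d w g := Iff.rfl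

lemma Avail_nil (w : Q n) (g : Sample n) : Avail [] w g ↔ Dbl g w := by
  unfold Avail
  rw [Taken_nil]
  tauto

lemma Avail_cons (d : Fin n) (l : List (Fin n)) (w : Q n) (g : Sample n) :
    Avail (d :: l) w g ↔ Avail l w g ∧ ¬ Alive l (flip d w) g := by
  constructor
  · rintro ⟨hD, hT⟩
    have hTl : ¬ Taken l w g := fun h => hT ((Taken_cons d l w g).mpr (Or.inl h))
    refine ⟨⟨hD, hTl⟩, fun hA => hT ((Taken_cons d l w g).mpr (Or.inr ⟨hA, hD, hTl⟩))⟩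
  · rintro ⟨⟨hD, hT⟩, hA⟩
    refine ⟨hD, fun h => ?_⟩
    rcases (Taken_cons d l w g).mp h with h' | h'
    · exact hT h'
    · exact hA h'.1

lemma Alive_lonely {l : List (Fin n)} {v : Q n} {g : Sample n} (h : Alive l v g) :
    Lonely g v := by
  induction l with
  | nil => exact h
  | cons d l ih => exact ih ((Alive_cons d l v g).mp h).1

/-! ### columns and supports -/

def cols : List (Fin n) → Q n → Finset (Q n)
  | [], v => {v}
  | d :: l, v => cols l v ∪ cols l (flip d v)

lemma self_mem_cols (l : List (Fin n)) (v : Q n) : v ∈ cols l v := by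
  induction l with
  | nil => exact Finset.mem_singleton_self v
  | cons d l ih => exact Finset.mem_union_left _ ih

lemma cols_eq_of {l : List (Fin n)} {u v : Q n} (hu : u ∈ cols l v) {j : Fin n}
    (hj : j ∉ l) : u j = v j := by
  induction l generalizing v with
  | nil =>
    rw [Finset.mem_singleton.mp hu]
  | cons d l ih =>
    have hjl : j ∉ l := fun h => hj (List.mem_cons_of_mem d h)
    have hjd : j ≠ d := fun h => hj (h ▸ (List.mem_cons_self : d ∈ d :: l))
    rcases Finset.mem_union.mp hu with h | h
    · exact ih h hjl
    · rw [ih h hjl, flip_apply_ne d v hjd]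

def slots (C : Finset (Q n)) : Finset (Pt n) := C.biUnion (fun u => {pt u false, pt u true})

lemma mem_slots {C : Finset (Q n)} {p : Pt n} :
    p ∈ slots C ↔ ∃ u ∈ C, ∃ b : Bool, p = pt u b := by
  unfold slots
  simp only [Finset.mem_biUnion, Finset.mem_insert, Finset.mem_singleton]
  constructor
  · rintro ⟨u, hu, h | h⟩
    · exact ⟨u, hu, false, h⟩
    · exact ⟨u, hu, true, h⟩
  · rintro ⟨u, hu, b, h⟩
    cases b
    · exact ⟨u, hu, Or.inl h⟩
    · exact ⟨u, hu, Or.inr h⟩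

lemma pt_mem_slots {C : Finset (Q n)} {u : Q n} (hu : u ∈ C) (b : Bool) : pt u b ∈ slots C :=
  mem_slots.mpr ⟨u, hu, b, rfl⟩

lemma slots_mono {C C' : Finset (Q n)} (h : C ⊆ C') : slots C ⊆ slots C' := by
  intro p hp
  rcases mem_slots.mp hp with ⟨u, hu, b, rfl⟩
  exact pt_mem_slots (h hu) b

lemma slots_disjoint {C C' : Finset (Q n)} (h : Disjoint C C') :
    Disjoint (slots C) (slots C') := by
  rw [Finset.disjoint_left]
  intro p hp hp'
  rcases mem_slots.mp hp with ⟨u, hu, b, rfl⟩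
  rcases mem_slots.mp hp' with ⟨u', hu', b', he⟩
  obtain ⟨rfl, rfl⟩ := pt_inj he
  exact (Finset.disjoint_left.mp h) hu hu'

lemma cols_disjoint {l : List (Fin n)} {d : Fin n} (hd : d ∉ l) (v : Q n) :
    Disjoint (cols l v) (cols l (flip d v)) := by
  rw [Finset.disjoint_left]
  intro u hu hu'
  have h1 : u d = v d := cols_eq_of hu hd
  have h2 : u d = flip d v d := cols_eq_of hu' hd
  rw [flip_apply_self] at h2
  rw [h1] at h2
  exact (Bool.self_ne_not (v d)) h2

lemma eventDep_Dbl {S : Finset (Pt n)} {w : Q n} (h0 : pt w false ∈ S) (h1 : pt w true ∈ S) :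
    eventDep S (fun g => Dbl g w) := by
  intro g g' hg
  show Dbl g w ↔ Dbl g' w
  unfold Dbl
  rw [hg _ h0, hg _ h1]

lemma AT_dep (l : List (Fin n)) :
    (∀ v : Q n, eventDep (slots (cols l v)) (Alive l v)) ∧
    (∀ w : Q n, eventDep (slots (cols l w)) (Taken l w)) := by
  induction l with
  | nil =>
    constructor
    · intro v g g' hg
      rw [Alive_nil, Alive_nil]
      unfold Lonely
      rw [hg _ (pt_mem_slots (self_mem_cols [] v) false),
        hg _ (pt_mem_slots (self_mem_cols [] v) true)]
    · intro w g g' hg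
      rw [Taken_nil, Taken_nil]
  | cons d l ih =>
    obtain ⟨ihA, ihT⟩ := ih
    have hsubL : ∀ v : Q n, slots (cols l v) ⊆ slots (cols (d :: l) v) := by
      intro v
      exact slots_mono (Finset.subset_union_left)
    have hsubR : ∀ v : Q n, slots (cols l (flip d v)) ⊆ slots (cols (d :: l) v) := by
      intro v
      exact slots_mono (Finset.subset_union_right)
    constructor
    · intro v g g' hg
      rw [Alive_cons, Alive_cons]
      have e1 := ihA v g g' (fun p hp => hg p (hsubL v hp))
      have e2 : Avail l (flip d v) g ↔ Avail l (flip d v) g' := by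
        unfold Avail
        have e3 := ihT (flip d v) g g' (fun p hp => hg p (hsubR v hp))
        have e4 := eventDep_Dbl (S := slots (cols (d::l) v))
          (pt_mem_slots (Finset.mem_union_right _ (self_mem_cols l (flip d v))) false)
          (pt_mem_slots (Finset.mem_union_right _ (self_mem_cols l (flip d v))) true)
          g g' hg
        tauto
      tauto
    · intro w g g' hg
      rw [Taken_cons, Taken_cons]
      have e1 := ihT w g g' (fun p hp => hg p (hsubL w hp))
      have e2 := ihA (flip d w) g g' (fun p hp => hg p (hsubR w hp))
      have e3 : Succ l d w g ↔ Succ l d w g' := by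
        unfold Succ Avail
        have e4 := eventDep_Dbl (S := slots (cols (d::l) w))
          (pt_mem_slots (Finset.mem_union_left _ (self_mem_cols l w)) false)
          (pt_mem_slots (Finset.mem_union_left _ (self_mem_cols l w)) true)
          g g' hg
        have e5 := ihT w g g' (fun p hp => hg p (hsubL w hp))
        tauto
      tauto

lemma eventDep_Alive (l : List (Fin n)) (v : Q n) :
    eventDep (slots (cols l v)) (Alive l v) := (AT_dep l).1 v

lemma eventDep_Avail (l : List (Fin n)) (w : Q n) :
    eventDep (slots (cols l w)) (Avail l w) := by
  intro g g' hg
  unfold Avail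
  have e1 := (AT_dep l).2 w g g' hg
  have e2 := eventDep_Dbl (S := slots (cols l w))
    (pt_mem_slots (self_mem_cols l w) false)
    (pt_mem_slots (self_mem_cols l w) true) g g' hg
  tauto

/-! ### the exact recursion -/

noncomputable def alph : ℕ → ℝ
  | 0 => 1 / 4
  | k + 1 => alph k * (1 - alph k)

theorem AT_prob (l : List (Fin n)) (hl : l.Nodup) :
    (∀ v : Q n, Ex (fun g => ind (Alive l v g)) = alph l.length) ∧
    (∀ w : Q n, Ex (fun g => ind (Avail l w g)) = alph l.length) := by
  induction l with
  | nil =>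
    constructor
    · intro v
      rw [show (fun g : Sample n => ind (Alive [] v g)) = fun g => ind (Lonely g v) from rfl]
      rw [Ex_ind_Lonely]
      rfl
    · intro w
      rw [show (fun g : Sample n => ind (Avail [] w g)) = fun g => ind (Dbl g w) from
        funext (fun g => ind_congr (Avail_nil w g))]
      rw [Ex_ind_Dbl]
      rfl
  | cons d l ih =>
    obtain ⟨hd, hnd⟩ := List.nodup_cons.mp hl
    obtain ⟨IH1, IH2⟩ := ih hnd
    have hdisj : ∀ v : Q n, Disjoint (slots (cols l v)) (slots (cols l (flip d v))) :=
      fun v => slots_disjoint (cols_disjoint hd v)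
    constructor
    · intro v
      have key : ∀ g : Sample n, ind (Alive (d :: l) v g) =
          ind (Alive l v g) * ind (¬ Avail l (flip d v) g) := by
        intro g
        rw [← ind_mul]
        exact ind_congr (Alive_cons d l v g)
      rw [funext key]
      rw [Ex_mul (eventDep_Alive l v).ind (eventDep_not (eventDep_Avail l (flip d v))).ind
        (hdisj v)]
      rw [IH1 v, Ex_ind_not, IH2 (flip d v)]
      rfl
    · intro w
      have key : ∀ g : Sample n, ind (Avail (d :: l) w g) =
          ind (Avail l w g) * ind (¬ Alive l (flip d w) g) := by
        intro g
        rw [← ind_mul]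
        exact ind_congr (Avail_cons d l w g)
      rw [funext key]
      rw [Ex_mul (eventDep_Avail l w).ind (eventDep_not (eventDep_Alive l (flip d w))).ind
        (hdisj w)]
      rw [IH2 w, Ex_ind_not, IH1 (flip d w)]
      rfl

lemma alph_nonneg : ∀ k, 0 ≤ alph k ∧ alph k ≤ 1 / (k + 4) := by
  intro k
  induction k with
  | zero =>
    constructor <;> norm_num [alph]
  | succ k ih =>
    obtain ⟨h0, h1⟩ := ih
    have hk4 : (0:ℝ) < (k:ℝ) + 4 := by positivity
    have hk5 : (0:ℝ) < (k:ℝ) + 5 := by positivity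
    have hquarter : alph k ≤ 1/4 := h1.trans (by
      rw [div_le_div_iff₀ hk4 (by norm_num)]
      linarith)
    constructor
    · show 0 ≤ alph k * (1 - alph k)
      apply mul_nonneg h0
      linarith
    · show alph k * (1 - alph k) ≤ 1 / (((k:ℕ) + 1 : ℕ) + 4)
      have hcast : ((((k:ℕ) + 1 : ℕ) : ℝ) + 4) = (k:ℝ) + 5 := by push_cast; ring
      rw [hcast]
      set a := alph k with ha
      set c : ℝ := 1/((k:ℝ)+4) with hc
      have hcpos : 0 < c := by positivity
      have hcq : c ≤ 1/4 := by
        rw [hc, div_le_div_iff₀ hk4 (by norm_num)]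
        linarith
      have h2 : 0 ≤ c - a := sub_nonneg.mpr h1
      have h3 : 0 ≤ 1 - c - a := by linarith
      have h4 : 0 ≤ (c - a) * (1 - c - a) := mul_nonneg h2 h3
      have step1 : a * (1 - a) ≤ c - c^2 := by nlinarith [h4]
      have step2 : c - c^2 ≤ 1/((k:ℝ)+5) := by
        have hval : c - c^2 = ((k:ℝ)+3)/(((k:ℝ)+4)^2) := by
          rw [hc]
          field_simp
          ring
        rw [hval, div_le_div_iff₀ (by positivity) hk5]
        nlinarith
      linarith
/-! ### direction list and blocks -/

variable (n) in
def J : ℕ := n / 4 + 4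

variable (n) in
def DS : List (Fin n) :=
  (List.range (min (J n) n)).pmap (fun i h => (⟨i, h⟩ : Fin n))
    (fun i hi => lt_of_lt_of_le (List.mem_range.mp hi) (min_le_right _ _))

lemma DS_nodup : (DS n).Nodup := by
  refine List.Nodup.pmap ?_ List.nodup_range
  intro a ha b hb h
  simpa using h

lemma mem_DS {j : Fin n} : j ∈ DS n ↔ (j : ℕ) < min (J n) n := by
  unfold DS
  rw [List.mem_pmap]
  constructor
  · rintro ⟨i, hi, rfl⟩
    exact List.mem_range.mp hi
  · intro h
    exact ⟨(j : ℕ), List.mem_range.mpr h, Fin.ext rfl⟩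

lemma length_DS : (DS n).length = min (J n) n := by
  unfold DS
  rw [List.length_pmap, List.length_range]

variable (n) in
def key (v : Q n) : Q n := fun i => if (i : ℕ) < min (J n) n then false else v i

lemma key_eq_of_cols {v u : Q n} (hu : u ∈ cols (DS n) v) : key n u = key n v := by
  funext i
  unfold key
  by_cases h : (i : ℕ) < min (J n) n
  · rw [if_pos h, if_pos h]
  · rw [if_neg h, if_neg h]
    exact cols_eq_of hu (fun hmem => h (mem_DS.mp hmem))

noncomputable def Xc (c : Q n) (g : Sample n) : ℝ :=
  ∑ v ∈ Finset.univ.filter (fun v : Q n => key n v = c), ind (Alive (DS n) v g)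

noncomputable def XX (g : Sample n) : ℝ := ∑ v : Q n, ind (Alive (DS n) v g)

lemma XX_eq_sum_Xc (g : Sample n) : XX g = ∑ c : Q n, Xc c g := by
  unfold XX Xc
  rw [Finset.sum_fiberwise]

variable (n) in
def Tc (c : Q n) : Finset (Pt n) :=
  (Finset.univ.filter (fun v : Q n => key n v = c)).biUnion (fun v => slots (cols (DS n) v))

lemma dependsOn_Xc (c : Q n) : dependsOn (Tc n c) (Xc c) := by
  intro g g' hg
  unfold Xc
  refine Finset.sum_congr rfl (fun v hv => ?_)
  refine ind_congr (eventDep_Alive (DS n) v g g' (fun p hp => hg p ?_))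
  exact Finset.mem_biUnion.mpr ⟨v, hv, hp⟩

lemma Tc_disjoint {c c' : Q n} (hcc : c ≠ c') : Disjoint (Tc n c) (Tc n c') := by
  rw [Finset.disjoint_left]
  intro p hp hp'
  rcases Finset.mem_biUnion.mp hp with ⟨v, hv, hpv⟩
  rcases Finset.mem_biUnion.mp hp' with ⟨v', hv', hpv'⟩
  rcases mem_slots.mp hpv with ⟨u, hu, b, rfl⟩
  rcases mem_slots.mp hpv' with ⟨u', hu', b', he⟩
  obtain ⟨rfl, rfl⟩ := pt_inj he
  apply hcc
  rw [← (Finset.mem_filter.mp hv).2, ← (Finset.mem_filter.mp hv').2,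
    ← key_eq_of_cols hu, ← key_eq_of_cols hu']

lemma Ex_Xc (c : Q n) : Ex (Xc c) =
    ((Finset.univ.filter (fun v : Q n => key n v = c)).card : ℝ) * alph (DS n).length := by
  unfold Xc
  rw [Ex_sum]
  rw [Finset.sum_congr rfl (fun v _ => ((AT_prob (DS n) DS_nodup).1 v))]
  rw [Finset.sum_const, nsmul_eq_mul]

lemma Ex_XX : Ex (XX (n := n)) = (2 ^ n : ℝ) * alph (DS n).length := by
  rw [show XX = fun g => ∑ c : Q n, Xc c g from funext XX_eq_sum_Xc, Ex_sum (n := n)]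
  rw [Finset.sum_congr rfl (fun c _ => Ex_Xc c)]
  rw [← Finset.sum_mul]
  congr 1
  have : ∑ c : Q n, ((Finset.univ.filter (fun v : Q n => key n v = c)).card : ℝ)
      = ((Finset.univ : Finset (Q n)).card : ℝ) := by
    rw [← Nat.cast_sum]
    congr 1
    rw [← Finset.card_eq_sum_card_fiberwise (f := key n) (t := Finset.univ)
      (fun x _ => Finset.mem_univ _)]
  rw [this, Finset.card_univ]
  simp [Fintype.card_fun]

lemma fiber_card_le (c : Q n) :
    ((Finset.univ.filter (fun v : Q n => key n v = c)).card : ℝ) ≤ (2 : ℝ) ^ (min (J n) n) := by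
  have : (Finset.univ.filter (fun v : Q n => key n v = c)).card ≤ 2 ^ (min (J n) n) := by
    have hcard : Fintype.card (Fin (min (J n) n) → Bool) = 2 ^ (min (J n) n) := by
      simp [Fintype.card_fun]
    rw [← hcard, ← Finset.card_univ]
    apply Finset.card_le_card_of_injOn
      (fun v => fun i : Fin (min (J n) n) => v ⟨(i : ℕ), lt_of_lt_of_le i.2 (min_le_right _ _)⟩)
      (fun v _ => Finset.mem_univ _)
    intro v hv v' hv' he
    have hkv := (Finset.mem_filter.mp hv).2
    have hkv' := (Finset.mem_filter.mp hv').2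
    funext i
    by_cases h : (i : ℕ) < min (J n) n
    · exact congrFun he ⟨(i : ℕ), h⟩
    · have e1 : key n v i = key n v' i := by rw [hkv, hkv']
      unfold key at e1
      rw [if_neg h, if_neg h] at e1
      exact e1
  calc ((Finset.univ.filter (fun v : Q n => key n v = c)).card : ℝ)
      ≤ ((2 ^ (min (J n) n) : ℕ) : ℝ) := by exact_mod_cast this
    _ = (2 : ℝ) ^ (min (J n) n) := by push_cast; ring

lemma Xc_nonneg (c : Q n) (g : Sample n) : 0 ≤ Xc c g :=
  Finset.sum_nonneg (fun v _ => ind_nonneg _)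

lemma Xc_le (c : Q n) (g : Sample n) : Xc c g ≤ (2 : ℝ) ^ (min (J n) n) := by
  calc Xc c g ≤ ∑ v ∈ Finset.univ.filter (fun v : Q n => key n v = c), (1:ℝ) :=
        Finset.sum_le_sum (fun v _ => ind_le_one _)
    _ = ((Finset.univ.filter (fun v : Q n => key n v = c)).card : ℝ) := by
        rw [Finset.sum_const, nsmul_eq_mul, mul_one]
    _ ≤ _ := fiber_card_le c

/-! ### Chernoff bound -/

lemma exp_le_quad {x : ℝ} (h0 : 0 ≤ x) (h1 : x ≤ 1) : Real.exp x ≤ 1 + x + x ^ 2 := by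
  have hb := Real.exp_bound (x := x) (by rwa [abs_of_nonneg h0]) (n := 2) (by norm_num)
  have hsum : ∑ i ∈ Finset.range 2, x ^ i / (Nat.factorial i) = 1 + x := by
    simp [Finset.sum_range_succ]
  rw [hsum, abs_of_nonneg h0] at hb
  have h2 := (abs_le.mp hb).2
  norm_num [Nat.factorial] at h2
  nlinarith [sq_nonneg x]

variable (n) in
noncomputable def MM : ℝ := 2 ^ (min (J n) n)

variable (n) in
noncomputable def lam : ℝ := 1 / (8 * MM n)

variable (n) in
noncomputable def tt : ℝ := 8 * 2 ^ n / ((n : ℝ) + 1)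

lemma MM_pos : 0 < MM n := by unfold MM; positivity

lemma lam_pos : 0 < lam n := by unfold lam; have := MM_pos (n := n); positivity

lemma lam_mul_MM : lam n * MM n = 1 / 8 := by
  unfold lam
  have := MM_pos (n := n)
  field_simp

lemma mgf_one (c : Q n) :
    Ex (fun g => Real.exp (lam n * Xc c g)) ≤
      Real.exp ((lam n + (lam n) ^ 2 * MM n) * Ex (Xc c)) := by
  have hM := MM_pos (n := n)
  have hlam := lam_pos (n := n)
  have hmu0 : 0 ≤ Ex (Xc c) := Ex_nonneg (Xc_nonneg c)
  have pointwise : ∀ g : Sample n, Real.exp (lam n * Xc c g) ≤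
      1 + lam n * Xc c g + (lam n) ^ 2 * MM n * Xc c g := by
    intro g
    have hx0 : 0 ≤ lam n * Xc c g := mul_nonneg hlam.le (Xc_nonneg c g)
    have hx1 : lam n * Xc c g ≤ 1 := by
      calc lam n * Xc c g ≤ lam n * MM n := by
            exact mul_le_mul_of_nonneg_left (Xc_le c g) hlam.le
        _ = 1 / 8 := lam_mul_MM
        _ ≤ 1 := by norm_num
    refine (exp_le_quad hx0 hx1).trans ?_
    have hXsq : Xc c g * Xc c g ≤ MM n * Xc c g :=
      mul_le_mul_of_nonneg_right (Xc_le c g) (Xc_nonneg c g)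
    have : (lam n * Xc c g) ^ 2 ≤ (lam n) ^ 2 * MM n * Xc c g := by
      have h1 : (lam n * Xc c g) ^ 2 = (lam n) ^ 2 * (Xc c g * Xc c g) := by ring
      have h2 : (lam n) ^ 2 * (Xc c g * Xc c g) ≤ (lam n) ^ 2 * (MM n * Xc c g) :=
        mul_le_mul_of_nonneg_left hXsq (sq_nonneg (lam n))
      rw [h1]
      exact h2.trans_eq (by ring)
    linarith
  have step1 : Ex (fun g => Real.exp (lam n * Xc c g)) ≤
      1 + (lam n + (lam n) ^ 2 * MM n) * Ex (Xc c) := by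
    refine (Ex_mono pointwise).trans ?_
    have : Ex (fun g : Sample n => 1 + lam n * Xc c g + (lam n) ^ 2 * MM n * Xc c g)
        = 1 + lam n * Ex (Xc c) + (lam n) ^ 2 * MM n * Ex (Xc c) := by
      rw [Ex_add, Ex_add, Ex_const, Ex_smul, Ex_smul]
    rw [this]
    ring_nf
    exact le_refl _
  refine step1.trans ?_
  have := Real.add_one_le_exp ((lam n + (lam n) ^ 2 * MM n) * Ex (Xc c))
  linarith

lemma mgf_total :
    Ex (fun g : Sample n => Real.exp (lam n * XX g)) ≤
      Real.exp ((lam n + (lam n) ^ 2 * MM n) * Ex (XX (n := n))) := by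
  have pointwise : ∀ g : Sample n,
      Real.exp (lam n * XX g) = ∏ c : Q n, Real.exp (lam n * Xc c g) := by
    intro g
    rw [XX_eq_sum_Xc, Finset.mul_sum, Real.exp_sum]
  rw [funext pointwise]
  rw [Ex_prod Finset.univ (fun c g => Real.exp (lam n * Xc c g)) (Tc n)
    (fun c _ => fun g g' hg => by
      show Real.exp (lam n * Xc c g) = Real.exp (lam n * Xc c g')
      rw [dependsOn_Xc c g g' hg])
    (fun c _ c' _ hcc => Tc_disjoint hcc)]
  have hle : ∏ c : Q n, Ex (fun g => Real.exp (lam n * Xc c g)) ≤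
      ∏ c : Q n, Real.exp ((lam n + (lam n) ^ 2 * MM n) * Ex (Xc c)) := by
    apply Finset.prod_le_prod
    · intro c _
      exact Ex_nonneg (fun g => (Real.exp_pos _).le)
    · intro c _
      exact mgf_one c
  refine hle.trans ?_
  rw [← Real.exp_sum]
  apply le_of_eq
  congr 1
  rw [← Finset.mul_sum]
  congr 1
  rw [show Ex (XX (n := n)) = Ex (fun g : Sample n => ∑ c : Q n, Xc c g) from
    congrArg Ex (funext XX_eq_sum_Xc), Ex_sum]

lemma bad_card :
    (((Finset.univ : Finset (Sample n)).filter (fun g => tt n < XX g)).card : ℝ) ≤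
      (Fintype.card (Sample n) : ℝ) *
        Real.exp ((lam n + (lam n) ^ 2 * MM n) * Ex (XX (n := n)) - lam n * tt n) := by
  have hlam := lam_pos (n := n)
  set bad := (Finset.univ : Finset (Sample n)).filter (fun g => tt n < XX g) with hbad
  have step1 : (bad.card : ℝ) * Real.exp (lam n * tt n) ≤
      ∑ g ∈ bad, Real.exp (lam n * XX g) := by
    have hconst : (bad.card : ℝ) * Real.exp (lam n * tt n) =
        ∑ _g ∈ bad, Real.exp (lam n * tt n) := by
      rw [Finset.sum_const, nsmul_eq_mul]
    rw [hconst]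
    apply Finset.sum_le_sum
    intro g hg
    have := (Finset.mem_filter.mp hg).2
    exact Real.exp_le_exp.mpr (mul_le_mul_of_nonneg_left this.le hlam.le)
  have step2 : ∑ g ∈ bad, Real.exp (lam n * XX g) ≤
      ∑ g : Sample n, Real.exp (lam n * XX g) :=
    Finset.sum_le_sum_of_subset_of_nonneg (Finset.filter_subset _ _)
      (fun g _ _ => (Real.exp_pos _).le)
  have step3 : ∑ g : Sample n, Real.exp (lam n * XX g) =
      (Fintype.card (Sample n) : ℝ) * Ex (fun g : Sample n => Real.exp (lam n * XX g)) := by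
    unfold Ex
    field_simp
  have step4 := mgf_total (n := n)
  have hN : (0:ℝ) < (Fintype.card (Sample n) : ℝ) := card_sample_pos
  have chain : (bad.card : ℝ) * Real.exp (lam n * tt n) ≤
      (Fintype.card (Sample n) : ℝ) *
        Real.exp ((lam n + (lam n) ^ 2 * MM n) * Ex (XX (n := n))) := by
    calc (bad.card : ℝ) * Real.exp (lam n * tt n) ≤ _ := step1
      _ ≤ _ := step2
      _ = _ := step3
      _ ≤ _ := by
          exact mul_le_mul_of_nonneg_left step4 hN.le
  have hexp : (0:ℝ) < Real.exp (lam n * tt n) := Real.exp_pos _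
  rw [Real.exp_sub, ← mul_div_assoc, le_div_iff₀ hexp]
  exact chain

/-! ### construction of the injection -/

noncomputable def resc : List (Fin n) → Q n → Sample n → Option (Fin n)
  | [], _, _ => none
  | d :: l, v, g => if Alive l v g then some d else resc l v g

lemma resc_spec {l : List (Fin n)} {v : Q n} {g : Sample n} (hL : Lonely g v)
    (hA : ¬ Alive l v g) :
    ∃ d l₂, resc l v g = some d ∧ (d :: l₂) <:+ l ∧ Succ l₂ d (flip d v) g := by
  induction l with
  | nil => exact absurd hL hA
  | cons d l ih =>
    by_cases h : Alive l v g
    · have havail : Avail l (flip d v) g := by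
        by_contra hAv
        exact hA ((Alive_cons d l v g).mpr ⟨h, hAv⟩)
      have halive : Alive l (flip d (flip d v)) g := by rw [flip_flip]; exact h
      exact ⟨d, l, by simp [resc, h], List.suffix_refl _, ⟨halive, havail⟩⟩
    · obtain ⟨d', l₂, h1, h2, h3⟩ := ih h
      exact ⟨d', l₂, by simp [resc, h, h1], h2.trans (List.suffix_cons d l), h3⟩

lemma Succ_taken {l m : List (Fin n)} {d : Fin n} {w : Q n} {g : Sample n}
    (hsuf : (d :: l) <:+ m) (hS : Succ l d w g) : Taken m w g := by
  induction m with
  | nil =>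
    have := hsuf.length_le
    simp at this
  | cons e m ih =>
    rcases List.suffix_cons_iff.mp hsuf with h | h
    · obtain ⟨rfl, rfl⟩ : d = e ∧ l = m := by
        injection h with h1 h2
        exact ⟨h1, h2⟩
      exact (Taken_cons d l w g).mpr (Or.inr hS)
    · exact (Taken_cons e m w g).mpr (Or.inl (ih h))

lemma suffix_total {α : Type*} {l₁ l₂ m : List α} (h1 : l₁ <:+ m) (h2 : l₂ <:+ m) :
    l₁ <:+ l₂ ∨ l₂ <:+ l₁ := by
  induction m with
  | nil =>
    rw [List.suffix_nil] at h1 h2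
    subst h1; subst h2
    exact Or.inl (List.suffix_refl _)
  | cons e m ih =>
    rcases List.suffix_cons_iff.mp h1 with ha | ha
    · subst ha
      rcases List.suffix_cons_iff.mp h2 with hb | hb
      · subst hb; exact Or.inl (List.suffix_refl _)
      · exact Or.inr (hb.trans (List.suffix_cons e m))
    · rcases List.suffix_cons_iff.mp h2 with hb | hb
      · subst hb
        exact Or.inl (ha.trans (List.suffix_cons e m))
      · exact ih ha hb

lemma Succ_unique {l₁ l₂ m : List (Fin n)} {d₁ d₂ : Fin n} {w : Q n} {g : Sample n}
    (h1 : (d₁ :: l₁) <:+ m) (h2 : (d₂ :: l₂) <:+ m)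
    (hS1 : Succ l₁ d₁ w g) (hS2 : Succ l₂ d₂ w g) : d₁ = d₂ ∧ l₁ = l₂ := by
  rcases suffix_total h1 h2 with h | h
  · rcases List.suffix_cons_iff.mp h with h' | h'
    · injection h' with e1 e2
      exact ⟨e1, e2⟩
    · exact absurd (Succ_taken h' hS1) hS2.2.2
  · rcases List.suffix_cons_iff.mp h with h' | h'
    · injection h' with e1 e2
      exact ⟨e1.symm, e2.symm⟩
    · exact absurd (Succ_taken h' hS2) hS1.2.2

noncomputable def phi (g : Sample n) (v : Q n) : Pt n :=
  if g (pt v false) = true then pt v false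
  else if g (pt v true) = true then pt v true
  else if Alive (DS n) v g then pt v false
  else match resc (DS n) v g with
    | some d => pt (flip d v) true
    | none => pt v false

lemma phi_cases (g : Sample n) (v : Q n) :
    (Lonely g v ∧ Alive (DS n) v g ∧ phi g v = pt v false) ∨
    (¬ Lonely g v ∧ ∃ b, phi g v = pt v b ∧ g (pt v b) = true ∧
      (b = true → g (pt v false) = false)) ∨
    (Lonely g v ∧ ¬ Alive (DS n) v g ∧ ∃ d l₂, (d :: l₂) <:+ DS n ∧
      Succ l₂ d (flip d v) g ∧ phi g v = pt (flip d v) true) := by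
  by_cases h1 : g (pt v false) = true
  · refine Or.inr (Or.inl ⟨fun hL => ?_, false, ?_, h1, fun hbt => by cases hbt⟩)
    · rw [hL.1] at h1; cases h1
    · unfold phi; rw [if_pos h1]
  by_cases h2 : g (pt v true) = true
  · refine Or.inr (Or.inl ⟨fun hL => ?_, true, ?_, h2, fun _ => ?_⟩)
    · rw [hL.2] at h2; cases h2
    · unfold phi; rw [if_neg h1, if_pos h2]
    · exact Bool.eq_false_iff.mpr h1
  have hL : Lonely g v := ⟨Bool.eq_false_iff.mpr h1, Bool.eq_false_iff.mpr h2⟩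
  by_cases h3 : Alive (DS n) v g
  · refine Or.inl ⟨hL, h3, ?_⟩
    unfold phi; rw [if_neg h1, if_neg h2, if_pos h3]
  · obtain ⟨d, l₂, hres, hsuf, hS⟩ := resc_spec hL h3
    refine Or.inr (Or.inr ⟨hL, h3, d, l₂, hsuf, hS, ?_⟩)
    unfold phi
    rw [if_neg h1, if_neg h2, if_neg h3, hres]

lemma phi_inj (g : Sample n) : Function.Injective (phi g) := by
  intro v v' he
  rcases phi_cases g v with ⟨hL, hA, hp⟩ | ⟨hL, b, hp, hgb, hbt⟩ | ⟨hL, hA, d, l₂, hsuf, hS, hp⟩ <;>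
    rcases phi_cases g v' with ⟨hL', hA', hp'⟩ | ⟨hL', b', hp', hgb', hbt'⟩ |
      ⟨hL', hA', d', l₂', hsuf', hS', hp'⟩
  · exact (pt_inj (hp ▸ hp' ▸ he)).1
  · obtain ⟨rfl, _⟩ := pt_inj (hp ▸ hp' ▸ he)
    exact absurd hL hL'
  · obtain ⟨hvc, hb⟩ := pt_inj (hp ▸ hp' ▸ he)
    cases hb
  · obtain ⟨rfl, _⟩ := pt_inj (hp ▸ hp' ▸ he)
    exact absurd hL' hL
  · exact (pt_inj (hp ▸ hp' ▸ he)).1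
  · -- v in slot case, v' rescued: pt v b = pt (flip d' v') true
    obtain ⟨hvc, hb⟩ := pt_inj (hp ▸ hp' ▸ he)
    subst hb
    have hdbl : Dbl g (flip d' v') := hS'.2.1
    rw [← hvc] at hdbl
    have hcontr := hdbl.1
    rw [hbt rfl] at hcontr
    cases hcontr
  · obtain ⟨hvc, hb⟩ := pt_inj (hp ▸ hp' ▸ he)
    cases hb
  · obtain ⟨hvc, hb⟩ := pt_inj (hp ▸ hp' ▸ he)
    subst hb
    have hdbl : Dbl g (flip d v) := hS.2.1
    rw [hvc] at hdbl
    have hcontr := hdbl.1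
    rw [hbt' rfl] at hcontr
    cases hcontr
  · -- both rescued
    obtain ⟨hvc, _⟩ := pt_inj (hp ▸ hp' ▸ he)
    have hS2 : Succ l₂' d' (flip d v) g := hvc ▸ hS'
    obtain ⟨rfl, rfl⟩ := Succ_unique hsuf hsuf' hS hS2
    have : flip d (flip d v) = flip d (flip d v') := by rw [hvc]
    rwa [flip_flip, flip_flip] at this

lemma phi_dist (g : Sample n) (v : Q n) :
    hammingDist v (fun j : Fin n => phi g v j.castSucc) ≤ 1 := by
  have hcol : ∀ (u : Q n) (b : Bool), (fun j : Fin n => pt u b j.castSucc) = u := by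
    intro u b
    funext j
    exact Fin.snoc_castSucc _ _ _
  have hflip : ∀ d : Fin n, hammingDist v (flip d v) ≤ 1 := by
    intro d
    unfold hammingDist
    calc _ ≤ ({d} : Finset (Fin n)).card := by
          apply Finset.card_le_card
          intro i hi
          simp only [Finset.mem_filter, Finset.mem_univ, true_and] at hi
          rw [Finset.mem_singleton]
          by_contra hne
          exact hi (flip_apply_ne d v hne).symm
      _ = 1 := Finset.card_singleton d
  rcases phi_cases g v with ⟨_, _, hp⟩ | ⟨_, b, hp, _, _⟩ | ⟨_, _, d, l₂, _, _, hp⟩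
  · rw [hp, hcol]
    simp [hammingDist]
  · rw [hp, hcol]
    simp [hammingDist]
  · rw [hp, hcol]
    exact hflip d

lemma phi_mem {g : Sample n} {v : Q n} (h : ¬ Alive (DS n) v g) : g (phi g v) = true := by
  rcases phi_cases g v with ⟨_, hA, _⟩ | ⟨_, b, hp, hgb, _⟩ | ⟨_, _, d, l₂, _, hS, hp⟩
  · exact absurd hA h
  · rw [hp]; exact hgb
  · rw [hp]
    exact hS.2.1.2

/-! ### counting for a good sample -/

lemma XX_card (g : Sample n) :
    XX g = ((Finset.univ.filter (fun v : Q n => Alive (DS n) v g)).card : ℝ) := by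
  unfold XX ind
  rw [Finset.sum_boole]

lemma phi_count {g : Sample n} (hX : XX g ≤ tt n) :
    (1 - 8 / ((n : ℝ) + 1)) * 2 ^ n ≤
        ((Finset.univ.filter (fun x : Fin n → Bool =>
          phi g x ∈ Finset.univ.filter (fun p : Pt n => g p = true))).card : ℝ) := by
  have hsub : Finset.univ.filter (fun v : Q n => ¬ Alive (DS n) v g) ⊆
      Finset.univ.filter (fun x : Q n =>
        phi g x ∈ Finset.univ.filter (fun p : Pt n => g p = true)) := by
    intro v hv
    rw [Finset.mem_filter] at hv ⊢
    exact ⟨Finset.mem_univ _, Finset.mem_filter.mpr ⟨Finset.mem_univ _, phi_mem hv.2⟩⟩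
  have hcards : (Finset.univ.filter (fun v : Q n => Alive (DS n) v g)).card +
      (Finset.univ.filter (fun v : Q n => ¬ Alive (DS n) v g)).card = 2 ^ n := by
    rw [Finset.card_filter_add_card_filter_not, Finset.card_univ]
    simp [Fintype.card_fun]
  have hreal : ((Finset.univ.filter (fun v : Q n => ¬ Alive (DS n) v g)).card : ℝ) =
      2 ^ n - XX g := by
    rw [XX_card]
    have := congrArg (fun x : ℕ => (x : ℝ)) hcards
    push_cast at this
    linarith
  have hn1 : (0:ℝ) < (n : ℝ) + 1 := by positivity
  have heq : (1 - 8 / ((n : ℝ) + 1)) * 2 ^ n = 2 ^ n - tt n := by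
    unfold tt
    field_simp
  calc (1 - 8 / ((n : ℝ) + 1)) * 2 ^ n = 2 ^ n - tt n := heq
    _ ≤ 2 ^ n - XX g := by linarith
    _ = _ := hreal.symm
    _ ≤ _ := by
        exact_mod_cast Nat.cast_le.mpr (Finset.card_le_card hsub)

/-! ### numerics -/

lemma J_le (hn : 100 ≤ n) : J n ≤ n := by
  unfold J
  omega

lemma min_J (hn : 100 ≤ n) : min (J n) n = J n := min_eq_left (J_le hn)

lemma tt_pos (n : ℕ) : 0 < tt n := by
  unfold tt
  positivity

lemma EX_le (hn : 100 ≤ n) : Ex (XX (n := n)) ≤ tt n / 2 := by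
  rw [Ex_XX, length_DS, min_J hn]
  have ha := alph_nonneg (J n)
  have h1 : alph (J n) ≤ 1 / ((J n : ℝ) + 4) := ha.2
  have h2 : (2:ℝ) ^ n * alph (J n) ≤ (2:ℝ) ^ n * (1 / ((J n : ℝ) + 4)) :=
    mul_le_mul_of_nonneg_left h1 (by positivity)
  refine h2.trans ?_
  unfold tt J
  have hnat : (n + 1 : ℕ) ≤ 4 * ((n / 4 + 4) + 4) := by omega
  have hcast : ((n : ℝ) + 1) ≤ 4 * (((n / 4 + 4 : ℕ) : ℝ) + 4) := by
    exact_mod_cast hnat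
  have hd1 : (0:ℝ) < ((n / 4 + 4 : ℕ) : ℝ) + 4 := by positivity
  have hd2 : (0:ℝ) < (n : ℝ) + 1 := by positivity
  rw [div_div]
  rw [mul_one_div, div_le_div_iff₀ hd1 (by positivity)]
  have hp : (0:ℝ) ≤ (2:ℝ) ^ n := by positivity
  nlinarith [hp]

lemma exponent_le (hn : 100 ≤ n) :
    (lam n + (lam n) ^ 2 * MM n) * Ex (XX (n := n)) - lam n * tt n ≤
      -(tt n / (32 * MM n)) := by
  have hM := MM_pos (n := n)
  have hlam := lam_pos (n := n)
  have ht := tt_pos n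
  have hEX0 : 0 ≤ Ex (XX (n := n)) := Ex_nonneg (fun g =>
    Finset.sum_nonneg (fun v _ => ind_nonneg _))
  have hEX := EX_le hn
  have hlm : lam n * MM n = 1/8 := lam_mul_MM
  have hfac : lam n + (lam n) ^ 2 * MM n = lam n * (9/8) := by
    have : (lam n) ^ 2 * MM n = lam n * (lam n * MM n) := by ring
    rw [this, hlm]
    ring
  rw [hfac]
  have step : lam n * (9/8) * Ex (XX (n := n)) ≤ lam n * (9/8) * (tt n / 2) := by
    apply mul_le_mul_of_nonneg_left hEX
    positivity
  have hlamval : lam n = 1 / (8 * MM n) := rfl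
  have h328 : lam n * tt n = tt n / (8 * MM n) := by
    rw [hlamval]
    ring
  have : lam n * (9/8) * (tt n / 2) - lam n * tt n = -(7/16) * (tt n / (8 * MM n)) := by
    rw [h328, hlamval]
    ring
  have hfinal : -(7/16) * (tt n / (8 * MM n)) ≤ -(tt n / (32 * MM n)) := by
    have e1 : tt n / (8 * MM n) = 4 * (tt n / (32 * MM n)) := by
      field_simp
      ring
    rw [e1]
    have hpos : 0 < tt n / (32 * MM n) := by positivity
    nlinarith
  linarith

lemma pow_helper : ∀ m : ℕ, 8 ≤ m → 16 * m ≤ 2 ^ m := by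
  intro m hm
  induction m with
  | zero => omega
  | succ k ih =>
    by_cases hk : 8 ≤ k
    · have h1 := ih hk
      have h2 : 16 ≤ 2 ^ k := calc 16 ≤ 16 * k := by omega
        _ ≤ 2 ^ k := h1
      calc 16 * (k + 1) = 16 * k + 16 := by ring
        _ ≤ 2 ^ k + 2 ^ k := by omega
        _ = 2 ^ (k + 1) := by ring
    · have : k + 1 = 8 := by omega
      rw [this]
      norm_num

lemma nat_numeric (hn : 100 ≤ n) :
    4 * (n + 1) * 2 ^ (n / 8 + 1) ≤ 2 ^ (n - J n) := by
  have e1 : n - J n = (n - n/4 - n/8 - 5) + (n/8 + 1) := by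
    unfold J
    omega
  have hbound : 4 * (n + 1) ≤ 2 ^ (n - n/4 - n/8 - 5) := by
    have e2 : n / 2 ≤ n - n/4 - n/8 - 5 := by omega
    calc 4 * (n + 1) ≤ 16 * (n / 2) := by omega
      _ ≤ 2 ^ (n / 2) := pow_helper _ (by omega)
      _ ≤ 2 ^ (n - n/4 - n/8 - 5) := Nat.pow_le_pow_right (by norm_num) e2
  calc 4 * (n + 1) * 2 ^ (n / 8 + 1)
      ≤ 2 ^ (n - n/4 - n/8 - 5) * 2 ^ (n / 8 + 1) := Nat.mul_le_mul_right _ hbound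
    _ = 2 ^ (n - J n) := by rw [e1]; ring

lemma tail_le (hn : 100 ≤ n) :
    Real.exp (-(tt n / (32 * MM n))) ≤
      (2:ℝ) ^ (-(2 : ℝ) ^ ((1/8 : ℝ) * ((n : ℝ) + 1))) := by
  have hM := MM_pos (n := n)
  have h2pos : (0:ℝ) < 2 := by norm_num
  have hMM : MM n = (2:ℝ) ^ (J n) := by
    unfold MM
    rw [min_J hn]
  set K : ℕ := n / 8 + 1 with hK
  have hy : (2:ℝ) ^ ((1/8 : ℝ) * ((n : ℝ) + 1)) ≤ (2:ℝ) ^ (K : ℕ) := by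
    rw [← Real.rpow_natCast 2 K]
    apply Real.rpow_le_rpow_of_exponent_le one_le_two
    have hnat : n + 1 ≤ 8 * K := by omega
    have : ((n:ℝ) + 1) ≤ 8 * (K : ℝ) := by exact_mod_cast hnat
    linarith
  have hy0 : (0:ℝ) ≤ (2:ℝ) ^ ((1/8 : ℝ) * ((n : ℝ) + 1)) := (Real.rpow_pos_of_pos h2pos _).le
  have hlog : Real.log 2 ≤ 1 := by
    have := Real.log_le_sub_one_of_pos h2pos
    linarith
  have hnat2 : 4 * (n + 1) * 2 ^ K * 2 ^ (J n) ≤ 2 ^ n := by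
    calc 4 * (n + 1) * 2 ^ K * 2 ^ (J n)
        ≤ 2 ^ (n - J n) * 2 ^ (J n) := Nat.mul_le_mul_right _ (nat_numeric hn)
      _ = 2 ^ n := by
          rw [← pow_add]
          congr 1
          have := J_le hn
          omega
  have hcast : (4:ℝ) * ((n:ℝ) + 1) * (2:ℝ) ^ K * (2:ℝ) ^ (J n) ≤ (2:ℝ) ^ n := by
    exact_mod_cast hnat2
  have hn1 : (0:ℝ) < (n:ℝ) + 1 := by positivity
  have hkey : Real.log 2 * (2:ℝ) ^ ((1/8 : ℝ) * ((n : ℝ) + 1)) ≤ tt n / (32 * MM n) := by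
    have step1 : Real.log 2 * (2:ℝ) ^ ((1/8 : ℝ) * ((n : ℝ) + 1)) ≤ (2:ℝ) ^ (K : ℕ) := by
      calc Real.log 2 * (2:ℝ) ^ ((1/8 : ℝ) * ((n : ℝ) + 1))
          ≤ 1 * (2:ℝ) ^ ((1/8 : ℝ) * ((n : ℝ) + 1)) := mul_le_mul_of_nonneg_right hlog hy0
        _ = (2:ℝ) ^ ((1/8 : ℝ) * ((n : ℝ) + 1)) := one_mul _
        _ ≤ _ := hy
    refine step1.trans ?_
    rw [hMM]
    unfold tt
    rw [div_div]
    rw [le_div_iff₀ (by positivity)]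
    nlinarith [hcast]
  rw [Real.rpow_def_of_pos h2pos, mul_neg]
  apply Real.exp_le_exp.mpr
  rw [neg_le_neg_iff]
  exact hkey

lemma bad_le_eps (hn : 100 ≤ n) :
    (((Finset.univ : Finset (Sample n)).filter (fun g => tt n < XX g)).card : ℝ) ≤
      (2:ℝ) ^ (-(2 : ℝ) ^ ((1/8 : ℝ) * ((n : ℝ) + 1))) * (Fintype.card (Sample n) : ℝ) := by
  have h1 := bad_card (n := n)
  have h2 : Real.exp ((lam n + (lam n) ^ 2 * MM n) * Ex (XX (n := n)) - lam n * tt n) ≤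
      Real.exp (-(tt n / (32 * MM n))) := Real.exp_le_exp.mpr (exponent_le hn)
  have h3 := tail_le hn
  have hN : (0:ℝ) ≤ (Fintype.card (Sample n) : ℝ) := card_sample_pos.le
  calc (((Finset.univ : Finset (Sample n)).filter (fun g => tt n < XX g)).card : ℝ)
      ≤ (Fintype.card (Sample n) : ℝ) *
        Real.exp ((lam n + (lam n) ^ 2 * MM n) * Ex (XX (n := n)) - lam n * tt n) := h1
    _ ≤ (Fintype.card (Sample n) : ℝ) * Real.exp (-(tt n / (32 * MM n))) :=
        mul_le_mul_of_nonneg_left h2 hN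
    _ ≤ (Fintype.card (Sample n) : ℝ) *
        ((2:ℝ) ^ (-(2 : ℝ) ^ ((1/8 : ℝ) * ((n : ℝ) + 1)))) :=
        mul_le_mul_of_nonneg_left h3 hN
    _ = _ := mul_comm _ _

end RSI

/-- There are constants `c, K > 0` such that for all large `n`, for at least a
`1 - 2^{-2^{cn}}` fraction of subsets `A` of the `(n+1)`-dimensional hypercube there is
an injection `φ_A : {0,1}^n → {0,1}^{n+1}` such that every `x` is within Hamming
distance 1 of the first `n` coordinates of `φ_A(x)`, and `φ_A(x) ∈ A` for at least a
`1 - K/(n+1)` fraction of points `x`. -/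
theorem random_subset_injection :
    ∃ c K : ℝ, 0 < c ∧ 0 < K ∧ ∃ N : ℕ, ∀ n : ℕ, N ≤ n →
      ∀ good : Finset (Finset (Fin (n + 1) → Bool)),
        good = Finset.univ.filter (fun A : Finset (Fin (n + 1) → Bool) =>
          ∃ φ : (Fin n → Bool) → (Fin (n + 1) → Bool),
            Function.Injective φ ∧
            (∀ x : Fin n → Bool,
              hammingDist x (fun j : Fin n => φ x j.castSucc) ≤ 1) ∧
            (1 - K / (n + 1)) * 2 ^ n ≤
              ((Finset.univ.filter (fun x : Fin n → Bool => φ x ∈ A)).card : ℝ)) →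
        (1 - 2 ^ (-(2 : ℝ) ^ (c * (n + 1)))) *
            ((Finset.univ : Finset (Finset (Fin (n + 1) → Bool))).card : ℝ) ≤
          (good.card : ℝ) := by
  refine ⟨1/8, 8, by norm_num, by norm_num, 100, ?_⟩
  intro n hn good hgood
  set ε : ℝ := (2:ℝ) ^ (-(2 : ℝ) ^ ((1/8 : ℝ) * ((n : ℝ) + 1))) with hε
  have hbad := RSI.bad_le_eps (n := n) hn
  have hcount : ((Finset.univ : Finset (RSI.Sample n)).filter
        (fun g => ¬ (RSI.tt n < RSI.XX g))).card +
      ((Finset.univ : Finset (RSI.Sample n)).filter (fun g => RSI.tt n < RSI.XX g)).card =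
      Fintype.card (RSI.Sample n) := by
    rw [add_comm, Finset.card_filter_add_card_filter_not, Finset.card_univ]
  have hmem : ∀ g : RSI.Sample n, ¬ (RSI.tt n < RSI.XX g) →
      (Finset.univ.filter (fun p : RSI.Pt n => g p = true)) ∈ good := by
    intro g hX
    rw [hgood]
    rw [Finset.mem_filter]
    refine ⟨Finset.mem_univ _, RSI.phi g, RSI.phi_inj g, RSI.phi_dist g, ?_⟩
    refine le_trans (RSI.phi_count (not_lt.mp hX)) (le_of_eq ?_)
    norm_cast
  have hinj : ((Finset.univ : Finset (RSI.Sample n)).filter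
        (fun g => ¬ (RSI.tt n < RSI.XX g))).card ≤ good.card := by
    apply Finset.card_le_card_of_injOn
      (fun g => Finset.univ.filter (fun p : RSI.Pt n => g p = true))
    · intro g hg
      exact hmem g (Finset.mem_filter.mp hg).2
    · intro g _ g' _ he
      dsimp only at he
      funext p
      have hiff : (p ∈ Finset.univ.filter (fun p : RSI.Pt n => g p = true)) ↔
          (p ∈ Finset.univ.filter (fun p : RSI.Pt n => g' p = true)) := by rw [he]
      simp only [Finset.mem_filter, Finset.mem_univ, true_and] at hiff
      cases hgp : g p <;> cases hgp' : g' p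
      · rfl
      · rw [hgp, hgp'] at hiff
        cases hiff.mpr rfl
      · rw [hgp, hgp'] at hiff
        cases hiff.mp rfl
      · rfl
  have hNN : ((Finset.univ : Finset (Finset (Fin (n + 1) → Bool))).card : ℝ) =
      (Fintype.card (RSI.Sample n) : ℝ) := by
    have h1 : (Finset.univ : Finset (Finset (Fin (n + 1) → Bool))).card =
        2 ^ (Fintype.card (Fin (n + 1) → Bool)) := by
      rw [Finset.card_univ, Fintype.card_finset]
    have h2 : Fintype.card (RSI.Sample n) = 2 ^ (Fintype.card (Fin (n + 1) → Bool)) := by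
      simp [Fintype.card_fun]
    rw [h1, h2]
  rw [hNN]
  have hc1 : (((Finset.univ : Finset (RSI.Sample n)).filter
      (fun g => ¬ (RSI.tt n < RSI.XX g))).card : ℝ) ≥
      (Fintype.card (RSI.Sample n) : ℝ) - ε * (Fintype.card (RSI.Sample n) : ℝ) := by
    have hcc := congrArg (fun x : ℕ => (x : ℝ)) hcount
    push_cast at hcc
    linarith
  have hgc : (((Finset.univ : Finset (RSI.Sample n)).filter
      (fun g => ¬ (RSI.tt n < RSI.XX g))).card : ℝ) ≤ (good.card : ℝ) := by
    exact_mod_cast hinj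
  calc (1 - ε) * (Fintype.card (RSI.Sample n) : ℝ)
      = (Fintype.card (RSI.Sample n) : ℝ) - ε * (Fintype.card (RSI.Sample n) : ℝ) := by ring
    _ ≤ _ := le_trans hc1 hgc
end
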